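/- Let n ≥ 2 be an integer, x ≥ 0 a real number, and a_0(n), a_1(n) real sequences. Then V_{n,1}(e_0; x) = 2a_0(n) − a_1(n), where e_0(t) = 1 (in particular the defining series and integrals converge absolutely). -/

import Mathlib

/-!
Differentiating the Baskakov basis gives `p'_{m,k} = m (p_{m+1,k-1} - p_{m+1,k})`, which telescopes:
`-(1/m) ∑_{j ≤ k} p_{m,j}` is an antiderivative of `p_{m+1,k}` rising from `-1/m` at `0` to `0`
at `∞`. Hence each `p_{n,k}` with `n ≥ 2` is integrable on `(0, ∞)` with integral `1/(n-1)`,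
independently of `k`. By the negative binomial series `∑_k p_{n,k}(x) = 1`, so
`∑_k p^1_{n,k}(x) = a(x,n) + b(x,n) = 2 a_0(n) - a_1(n)`, and the factor `n - 1` cancels the integrals.
-/

open MeasureTheory Filter Topology

/-- Baskakov basis function `p_{n,k}(x) = C(n+k-1, k) x^k / (1+x)^{n+k}`. -/
noncomputable def bask (n k : ℕ) (x : ℝ) : ℝ :=
  (Nat.choose (n + k - 1) k : ℝ) * x ^ k / (1 + x) ^ (n + k)

/-- Modified basis `p^1_{n,k}(x) = a(x,n) p_{n+1,k}(x) + b(x,n) p_{n+1,k-1}(x)`,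
with `p_{n+1,-1} = 0`. -/
noncomputable def p1 (a0 a1 : ℕ → ℝ) (n k : ℕ) (x : ℝ) : ℝ :=
  (a0 n + a1 n * x) * bask (n + 1) k x
    + (a0 n - a1 n * (1 + x)) * (if k = 0 then 0 else bask (n + 1) (k - 1) x)

/-- First-order modified Baskakov–Durrmeyer operator. -/
noncomputable def V1 (a0 a1 : ℕ → ℝ) (n : ℕ) (f : ℝ → ℝ) (x : ℝ) : ℝ :=
  ((n : ℝ) - 1) * ∑' k : ℕ, p1 a0 a1 n k x * ∫ t in Set.Ioi (0 : ℝ), bask n k t * f t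

open Set

lemma bask_nonneg (n k : ℕ) {x : ℝ} (hx : 0 ≤ x) : 0 ≤ bask n k x := by
  unfold bask
  positivity

lemma bask_succ (m k : ℕ) (x : ℝ) :
    bask (m + 1) k x = (m + k).choose k * x ^ k / (1 + x) ^ (m + 1 + k) := by
  rw [bask, Nat.add_right_comm, Nat.add_sub_cancel]

lemma hasSum_bask (n : ℕ) {x : ℝ} (hx : 0 ≤ x) : HasSum (fun k ↦ bask n k x) 1 := by
  obtain _ | m := n
  · convert hasSum_single (f := fun k ↦ bask 0 k x) 0 fun k hk ↦ ?_
    · simp [bask]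
    · simp [bask, Nat.choose_eq_zero_of_lt (Nat.sub_lt (Nat.pos_of_ne_zero hk) one_pos)]
  have h1 : 0 < 1 + x := by linarith
  have hr : ‖x / (1 + x)‖ < 1 := by
    rw [Real.norm_eq_abs, abs_of_nonneg (by positivity), div_lt_one h1]
    linarith
  have h := (hasSum_choose_mul_geometric_of_norm_lt_one m hr).mul_left ((1 + x)⁻¹ ^ (m + 1))
  have hsum : (1 + x)⁻¹ ^ (m + 1) * (1 / (1 - x / (1 + x)) ^ (m + 1)) = 1 := by
    field_simp
    simp
  rw [hsum] at h
  refine h.congr_fun fun k ↦ ?_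
  rw [bask_succ, add_comm m k, Nat.choose_symm_add, div_pow, pow_add, inv_pow]
  field_simp

lemma hasDerivAt_one_add_pow (N : ℕ) (t : ℝ) :
    HasDerivAt (fun s : ℝ ↦ (1 + s) ^ N) (N * (1 + t) ^ (N - 1)) t :=
  (hasDerivAt_pow N (1 + t)).comp_const_add 1 t

lemma hasDerivAt_bask_zero (m : ℕ) {t : ℝ} (ht : 1 + t ≠ 0) :
    HasDerivAt (bask (m + 1) 0) (-((m + 1) * bask (m + 2) 0 t)) t := by
  have hf : bask (m + 1) 0 = fun s ↦ 1 / (1 + s) ^ (m + 1) := by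
    ext s
    simp [bask_succ]
  rw [hf]
  refine ((hasDerivAt_const t 1).div (hasDerivAt_one_add_pow (m + 1) t)
    (pow_ne_zero _ ht)).congr_deriv ?_
  simp only [bask_succ, Nat.choose_zero_right]
  field_simp
  push_cast
  ring

lemma hasDerivAt_bask_succ (m k : ℕ) {t : ℝ} (ht : 1 + t ≠ 0) :
    HasDerivAt (bask (m + 1) (k + 1))
      ((m + 1) * (bask (m + 2) k t - bask (m + 2) (k + 1) t)) t := by
  have hf : bask (m + 1) (k + 1) =
      fun s ↦ ((m + (k + 1)).choose (k + 1) : ℝ) * (s ^ (k + 1) / (1 + s) ^ (m + 1 + (k + 1))) := by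
    ext s
    rw [bask_succ, mul_div_assoc]
  rw [hf]
  refine (((hasDerivAt_pow (k + 1) t).div (hasDerivAt_one_add_pow _ t)
    (pow_ne_zero _ ht)).const_mul _).congr_deriv ?_
  have hm : (m + 1 : ℝ) ≠ 0 := by positivity
  have e1 : ((m + k + 1).choose k : ℝ) = (m + k + 1).choose (k + 1) * (k + 1) / (m + 1) := by
    rw [eq_div_iff hm]
    have := Nat.choose_succ_right_eq (m + k + 1) k
    rw [show m + k + 1 - k = m + 1 by omega] at this
    exact_mod_cast this.symm
  have e2 : ((m + k + 2).choose (k + 1) : ℝ) = (m + k + 1).choose (k + 1) * (m + k + 2) / (m + 1) := by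
    rw [eq_div_iff hm]
    have := Nat.choose_mul_succ_eq (m + k + 1) (k + 1)
    rw [show m + k + 1 + 1 - (k + 1) = m + 1 by omega] at this
    exact_mod_cast this.symm
  simp only [bask_succ, show m + 1 + k = m + k + 1 by ring, show m + 1 + (k + 1) = m + k + 2 by ring,
    show m + (k + 1) = m + k + 1 by ring, e1, e2]
  field_simp
  push_cast
  ring

lemma hasDerivAt_sum_bask (m k : ℕ) {t : ℝ} (ht : 1 + t ≠ 0) :
    HasDerivAt (fun s ↦ ∑ j ∈ Finset.range (k + 1), bask (m + 1) j s)
      (-((m + 1) * bask (m + 2) k t)) t := by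
  induction k with
  | zero => simpa using hasDerivAt_bask_zero m ht
  | succ k ih =>
    simp_rw [Finset.sum_range_succ _ (k + 1)]
    exact (ih.add (hasDerivAt_bask_succ m k ht)).congr_deriv (by ring)

lemma sum_bask_zero (n k : ℕ) : ∑ j ∈ Finset.range (k + 1), bask n j 0 = 1 := by
  simp [Finset.sum_range_succ', bask]

lemma tendsto_bask_atTop (m k : ℕ) : Tendsto (bask (m + 1) k) atTop (𝓝 0) := by
  have hdom : Tendsto (fun t : ℝ ↦ (m + k).choose k * ((1 + t) ^ (m + 1))⁻¹) atTop (𝓝 0) := by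
    simpa using ((tendsto_pow_atTop (Nat.succ_ne_zero m)).comp
      (tendsto_atTop_add_const_left _ 1 tendsto_id)).inv_tendsto_atTop.const_mul
        ((m + k).choose k : ℝ)
  refine squeeze_zero' (eventually_ge_atTop 0 |>.mono fun t ht ↦ bask_nonneg _ _ ht)
    (eventually_ge_atTop 0 |>.mono fun t ht ↦ ?_) hdom
  have h1 : 0 < 1 + t := by linarith
  calc bask (m + 1) k t = (m + k).choose k * t ^ k / ((1 + t) ^ (m + 1) * (1 + t) ^ k) := by
        rw [bask_succ, pow_add]
    _ ≤ (m + k).choose k * (1 + t) ^ k / ((1 + t) ^ (m + 1) * (1 + t) ^ k) := by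
        gcongr
        linarith
    _ = (m + k).choose k * ((1 + t) ^ (m + 1))⁻¹ := by
        field_simp

lemma hasDerivAt_antideriv_bask (m k : ℕ) {t : ℝ} (ht : 0 ≤ t) :
    HasDerivAt (fun s ↦ -(∑ j ∈ Finset.range (k + 1), bask (m + 1) j s) / (m + 1))
      (bask (m + 2) k t) t := by
  refine (hasDerivAt_sum_bask m k (by positivity)).neg.div_const _ |>.congr_deriv ?_
  field_simp

lemma tendsto_antideriv_bask_atTop (m k : ℕ) :
    Tendsto (fun s ↦ -(∑ j ∈ Finset.range (k + 1), bask (m + 1) j s) / (m + 1)) atTop (𝓝 0) := by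
  simpa using ((tendsto_finsetSum _ fun j _ ↦ tendsto_bask_atTop m j).neg.div_const _)

lemma integrableOn_bask {n : ℕ} (hn : 2 ≤ n) (k : ℕ) : IntegrableOn (bask n k) (Ioi 0) := by
  obtain ⟨m, rfl⟩ := Nat.exists_eq_add_of_le' hn
  exact integrableOn_Ioi_deriv_of_nonneg' (fun t ht ↦ hasDerivAt_antideriv_bask m k ht)
    (fun t ht ↦ bask_nonneg _ _ ht.out.le) (tendsto_antideriv_bask_atTop m k)

lemma integral_bask {n : ℕ} (hn : 2 ≤ n) (k : ℕ) : ∫ t in Ioi 0, bask n k t = ((n : ℝ) - 1)⁻¹ := by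
  obtain ⟨m, rfl⟩ := Nat.exists_eq_add_of_le' hn
  rw [integral_Ioi_of_hasDerivAt_of_tendsto' (fun t ht ↦ hasDerivAt_antideriv_bask m k ht)
    (integrableOn_bask hn k) (tendsto_antideriv_bask_atTop m k), sum_bask_zero]
  push_cast
  ring

lemma hasSum_bask_pred (n : ℕ) {x : ℝ} (hx : 0 ≤ x) :
    HasSum (fun k ↦ if k = 0 then 0 else bask n (k - 1) x) 1 := by
  rw [← hasSum_nat_add_iff' 1]
  simpa using hasSum_bask n hx

lemma hasSum_p1 (a0 a1 : ℕ → ℝ) (n : ℕ) {x : ℝ} (hx : 0 ≤ x) :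
    HasSum (fun k ↦ p1 a0 a1 n k x) (2 * a0 n - a1 n) := by
  rw [show 2 * a0 n - a1 n = (a0 n + a1 n * x) * 1 + (a0 n - a1 n * (1 + x)) * 1 by ring]
  exact ((hasSum_bask (n + 1) hx).mul_left _).add ((hasSum_bask_pred (n + 1) hx).mul_left _)

theorem V1_moment_e0 (n : ℕ) (hn : 2 ≤ n) (x : ℝ) (hx : 0 ≤ x) (a0 a1 : ℕ → ℝ) :
    (∀ k : ℕ, IntegrableOn (fun t : ℝ => bask n k t * (1 : ℝ)) (Set.Ioi 0)) ∧
    Summable (fun k : ℕ =>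
      |p1 a0 a1 n k x * ∫ t in Set.Ioi (0 : ℝ), bask n k t * (1 : ℝ)|) ∧
    V1 a0 a1 n (fun _ => (1 : ℝ)) x = 2 * a0 n - a1 n := by
  have hint : ∀ k, ∫ t in Set.Ioi 0, bask n k t * (1 : ℝ) = ((n : ℝ) - 1)⁻¹ := by
    simpa using integral_bask hn
  have hn1 : (n : ℝ) - 1 ≠ 0 := by
    have : (2 : ℝ) ≤ n := by exact_mod_cast hn
    linarith
  refine ⟨fun k ↦ by simpa using integrableOn_bask hn k, ?_, ?_⟩
  · simp_rw [hint]
    exact ((hasSum_p1 a0 a1 n hx).summable.mul_right _).abs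
  · rw [V1]
    simp_rw [hint]
    rw [tsum_mul_right, (hasSum_p1 a0 a1 n hx).tsum_eq]
    field_simp
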